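/- If C ⊆ F_3^n is a linear m-trifferent code and x, y ∈ C are nonzero codewords, then for every set D of m−1 coordinates, the support of x restricted to [n]\D is not strictly contained in the support of y restricted to [n]\D. (Forward direction of the equivalence between m-trifferent and m-minimal linear codes; proved by considering the codewords x, y, and −x.) -/

import Mathlib

/-- Three words in `F_3^n` triffer at position `i` if their `i`-th coordinates are
the three distinct elements of `F_3`. -/
def TriffersZ {n : ℕ} (a b c : Fin n → ZMod 3) (i : Fin n) : Prop :=
  ({a i, b i, c i} : Finset (ZMod 3)) = Finset.univ

instance {n : ℕ} (a b c : Fin n → ZMod 3) (i : Fin n) : Decidable (TriffersZ a b c i) := by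
  unfold TriffersZ; infer_instance

/-- A set of words is `m`-trifferent if every three distinct elements triffer in
at least `m` positions. -/
def IsTrifferentSet {n : ℕ} (m : ℕ) (S : Set (Fin n → ZMod 3)) : Prop :=
  ∀ x ∈ S, ∀ y ∈ S, ∀ z ∈ S, x ≠ y → x ≠ z → y ≠ z →
    m ≤ (Finset.univ.filter fun i => TriffersZ x y z i).card

/-! The trifferent triple is `x, y, -x`: a coordinate where it triffers has `x i ≠ 0 = y i`, so
outside `D` it would lie in the support of `x` but not in that of `y`. Hence all of its at least
`m` triffering coordinates lie in `D`, which has only `m - 1` elements. -/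

namespace ZMod3

lemma insert_insert_neg_eq_univ_iff (a b : ZMod 3) :
    ({a, b, -a} : Finset (ZMod 3)) = Finset.univ ↔ a ≠ 0 ∧ b = 0 := by
  revert a b; decide

lemma neg_ne_self {ι : Type*} {x : ι → ZMod 3} (hx : x ≠ 0) : -x ≠ x := by
  obtain ⟨i, hi⟩ := Function.ne_iff.mp hx
  have neg_eq_self : ∀ a : ZMod 3, -a = a → a = 0 := by decide
  exact fun h => hi (neg_eq_self _ (congrFun h i))

end ZMod3

lemma triffersZ_neg_iff {n : ℕ} (x y : Fin n → ZMod 3) (i : Fin n) :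
    TriffersZ x y (-x) i ↔ x i ≠ 0 ∧ y i = 0 :=
  ZMod3.insert_insert_neg_eq_univ_iff (x i) (y i)

lemma filter_neg_ne_zero {n : ℕ} (D : Finset (Fin n)) (x : Fin n → ZMod 3) :
    (Finset.univ.filter fun i => i ∉ D ∧ (-x) i ≠ 0) =
      Finset.univ.filter fun i => i ∉ D ∧ x i ≠ 0 := by
  simp only [Pi.neg_apply, ne_eq, neg_eq_zero]

lemma filter_triffersZ_neg_subset {n : ℕ} {D : Finset (Fin n)} {x y : Fin n → ZMod 3}
    (hxy : (Finset.univ.filter fun i => i ∉ D ∧ x i ≠ 0) ⊆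
      Finset.univ.filter fun i => i ∉ D ∧ y i ≠ 0) :
    (Finset.univ.filter fun i => TriffersZ x y (-x) i) ⊆ D := by
  intro i hi
  obtain ⟨hxi, hyi⟩ := (triffersZ_neg_iff x y i).mp (Finset.mem_filter.mp hi).2
  by_contra hiD
  exact (Finset.mem_filter.mp (hxy (Finset.mem_filter.mpr ⟨Finset.mem_univ i, hiD, hxi⟩))).2.2 hyi

theorem stmt15_general (n m : ℕ) (hm : 1 ≤ m) (C : Submodule (ZMod 3) (Fin n → ZMod 3))
    (htr : IsTrifferentSet m (C : Set (Fin n → ZMod 3)))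
    (x y : Fin n → ZMod 3) (hx : x ∈ C) (hy : y ∈ C) (hx0 : x ≠ 0)
    (D : Finset (Fin n)) (hD : D.card = m - 1) :
    ¬ (Finset.univ.filter fun i => i ∉ D ∧ x i ≠ 0) ⊂
      (Finset.univ.filter fun i => i ∉ D ∧ y i ≠ 0) := by
  intro hss
  have hxy : x ≠ y := by
    rintro rfl
    exact hss.ne rfl
  have hyx : y ≠ -x := by
    rintro rfl
    exact hss.ne (filter_neg_ne_zero D x).symm
  have hcard := htr x hx y hy (-x) (neg_mem hx) hxy (ZMod3.neg_ne_self hx0).symm hyx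
  have := Finset.card_le_card (filter_triffersZ_neg_subset hss.subset)
  omega

theorem stmt15 (n m : ℕ) (hm : 1 ≤ m) (C : Submodule (ZMod 3) (Fin n → ZMod 3))
    (htr : IsTrifferentSet m (C : Set (Fin n → ZMod 3)))
    (x y : Fin n → ZMod 3) (hx : x ∈ C) (hy : y ∈ C) (hx0 : x ≠ 0) (hy0 : y ≠ 0)
    (D : Finset (Fin n)) (hD : D.card = m - 1) :
    ¬ (Finset.univ.filter fun i => i ∉ D ∧ x i ≠ 0) ⊂
      (Finset.univ.filter fun i => i ∉ D ∧ y i ≠ 0) :=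
  stmt15_general n m hm C htr x y hx hy hx0 D hD
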